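/- (First Chernoff boosting step.) Let B, W ⊆ [n] be sets in G(n,p) with |B| = (np)^{−1/(4(r−1))} p^{−1}/4 and |W| = o(n). Then with probability 1 − exp(−ω(p^{−1})), the number of vertices in [n]∖(B ∪ W) having at least r neighbours in B is at least (np)^{1/(4(r−1))} p^{−1}. -/

import Mathlib

open MeasureTheory Filter Finset

noncomputable section

/-- `P[Bin(t,p) ≥ r]`, the upper tail of the binomial distribution. -/
def binomTail (r t : ℕ) (p : ℝ) : ℝ :=
  ∑ j ∈ Finset.Icc r t, (t.choose j : ℝ) * p ^ j * (1 - p) ^ (t - j)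

/-- `δ = max{(n p^r)^{1/(2(r-1))}, (np)^{-1/(4(r-1))}}`. -/
def deltaP (r : ℕ) (p : ℕ → ℝ) (n : ℕ) : ℝ :=
  max (((n : ℝ) * p n ^ r) ^ ((1 : ℝ) / (2 * ((r : ℝ) - 1))))
      (((n : ℝ) * p n) ^ (-(1 : ℝ) / (4 * ((r : ℝ) - 1))))

/-- `t_0 = ((1+δ)(r-1)!/(n p^r))^{1/(r-1)}`. -/
def tZero (r : ℕ) (p : ℕ → ℝ) (n : ℕ) : ℝ :=
  ((1 + deltaP r p n) * (Nat.factorial (r - 1) : ℝ) / ((n : ℝ) * p n ^ r)) ^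
    ((1 : ℝ) / ((r : ℝ) - 1))

/-- `(n π̂(t) - t)/(1 - π̂(t))`. -/
def critFun (r : ℕ) (p : ℕ → ℝ) (n : ℕ) (t : ℕ) : ℝ :=
  ((n : ℝ) * binomTail r t (p n) - t) / (1 - binomTail r t (p n))

/-- `a_c = - min_{t ≤ t_0} (n π̂(t) - t)/(1 - π̂(t))`. -/
def aCrit (r : ℕ) (p : ℕ → ℝ) (n : ℕ) : ℝ :=
  - Finset.min' ((Finset.range (⌊tZero r p n⌋₊ + 1)).image (critFun r p n))
      (Finset.Nonempty.image (Finset.nonempty_range_iff.mpr (Nat.succ_ne_zero _)) _)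

/-- `t_c`, the smallest `t ≤ t_0` attaining the minimum defining `a_c`. -/
def tCrit (r : ℕ) (p : ℕ → ℝ) (n : ℕ) : ℕ :=
  sInf {t : ℕ | t ≤ ⌊tZero r p n⌋₊ ∧ critFun r p n t = - aCrit r p n}

/-- The Bernoulli measure with parameter `q` on `Bool`. -/
def bernoulliMeasure (q : ℝ) : Measure Bool :=
  (PMF.bernoulli (min (Real.toNNReal q) 1) (min_le_right _ _)).toMeasure

instance (q : ℝ) : IsProbabilityMeasure (bernoulliMeasure q) :=
  PMF.toMeasure.isProbabilityMeasure _

/-- The binomial random graph `G(n,q)`: each potential edge is present independently with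
probability `q`. A sample is a function `Sym2 (Fin n) → Bool`. -/
def gnp (n : ℕ) (q : ℝ) : Measure (Sym2 (Fin n) → Bool) :=
  Measure.pi fun _ => bernoulliMeasure q

/-- The simple graph determined by a sample `ω` of `G(n,q)`. -/
def toGraph {n : ℕ} (ω : Sym2 (Fin n) → Bool) : SimpleGraph (Fin n) where
  Adj u v := u ≠ v ∧ ω s(u, v) = true
  symm := by
    constructor
    intro u v h
    exact ⟨h.1.symm, by rw [Sym2.eq_swap]; exact h.2⟩
  loopless := ⟨fun v h => h.1 rfl⟩

/-- The number of neighbours of `v` inside the set `S` in the graph given by `ω`. -/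
def nbrCount {n : ℕ} (ω : Sym2 (Fin n) → Bool) (S : Finset (Fin n)) (v : Fin n) : ℕ :=
  (S.filter fun u => u ≠ v ∧ ω s(u, v) = true).card

/-- The set of the first `a` vertices, the initially infected set `A(0) = {1,…,a}`. -/
def initSet (n a : ℕ) : Finset (Fin n) :=
  Finset.univ.filter fun v => v.val < a

/-- One round of bootstrap percolation with threshold `r`. -/
def bstep {n : ℕ} (r : ℕ) (ω : Sym2 (Fin n) → Bool) (S : Finset (Fin n)) : Finset (Fin n) :=
  S ∪ Finset.univ.filter fun v => r ≤ nbrCount ω S v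

/-- The final infected set `A_f` of bootstrap percolation with threshold `r` started at `A0`. -/
def finalSet {n : ℕ} (r : ℕ) (ω : Sym2 (Fin n) → Bool) (A0 : Finset (Fin n)) : Finset (Fin n) :=
  (bstep r ω)^[n] A0

/-- The exploration process: `Z(t)`, the set of examined vertices at time `t`. -/
def expZ {n : ℕ} (r a : ℕ) (ω : Sym2 (Fin n) → Bool) : ℕ → Finset (Fin n)
  | 0 => ∅
  | t + 1 =>
    let Z := expZ r a ω t
    let A := initSet n a ∪ (Finset.univ.filter fun v => a ≤ v.val ∧ r ≤ nbrCount ω Z v)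
    if h : (A \ Z).Nonempty then insert ((A \ Z).min' h) Z else Z

/-- The infected set `A(t)` at time `t` of the exploration process. -/
def expA {n : ℕ} (r a : ℕ) (ω : Sym2 (Fin n) → Bool) (t : ℕ) : Finset (Fin n) :=
  initSet n a ∪ (Finset.univ.filter fun v => a ≤ v.val ∧ r ≤ nbrCount ω (expZ r a ω t) v)

/-- `T`, the smallest `t` with `A(t) = Z(t)`. -/
def expT {n : ℕ} (r a : ℕ) (ω : Sym2 (Fin n) → Bool) : ℕ :=
  sInf {t | expA r a ω t = expZ r a ω t}

/-- `X(t,i)`, the indicator that vertex `a+i` has at least `r` neighbours in `Z(t)`. -/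
def expX {n : ℕ} (r a : ℕ) (ω : Sym2 (Fin n) → Bool) (t i : ℕ) : ℝ :=
  if h : 1 ≤ i ∧ a + i ≤ n then
    (if r ≤ nbrCount ω (expZ r a ω t) ⟨a + i - 1, by omega⟩ then 1 else 0)
  else 0

/-- `π(t) = π̂(t)` for `t ≤ T` and `π(t) = π̂(T)` for `t > T`. -/
def expPi {n : ℕ} (r a : ℕ) (q : ℝ) (ω : Sym2 (Fin n) → Bool) (t : ℕ) : ℝ :=
  if t ≤ expT r a ω then binomTail r t q else binomTail r (expT r a ω) q

/-- The martingale value `M(t,i)`. -/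
def expM {n : ℕ} (r a : ℕ) (q : ℝ) (t i : ℕ) (ω : Sym2 (Fin n) → Bool) : ℝ :=
  (∑ j ∈ Finset.Icc 1 i, (expX r a ω t j - expPi r a q ω t) / (1 - expPi r a q ω t)) +
  ∑ j ∈ Finset.Icc (i + 1) (n - a),
    (expX r a ω (t - 1) j - expPi r a q ω (t - 1)) / (1 - expPi r a q ω (t - 1))

/-- The rounds `(0,n-a), (1,1), …, (n,n-a)` listed linearly: round `0` is `(0,n-a)` and
round `k ≥ 1` is `(⌈k/(n-a)⌉, ((k-1) mod (n-a)) + 1)`. -/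
def expMseq (n r a : ℕ) (q : ℝ) (k : ℕ) (ω : Sym2 (Fin n) → Bool) : ℝ :=
  if k = 0 then expM r a q 0 (n - a) ω
  else expM r a q ((k - 1) / (n - a) + 1) ((k - 1) % (n - a) + 1) ω

/-!
For `v ∉ B` the number of neighbours of `v` in `B` is `Bin(|B|, p)`, and these counts are
independent over `v`, being determined by disjoint sets of edges. The Chernoff bound at
`t = -log 2` shows that fewer than `k` of the `m ≥ n/2` vertices outside `B ∪ W` have `r`
neighbours in `B` with probability at most `2^k exp(-m π / 2)`, where
`π = P[Bin(|B|, p) ≥ r] ≥ (|B| p / 2)^r / (2 r!)`. Since `|B| p = (np)^{-ε} / 4` with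
`ε = 1/(4(r-1))`, the exponent `m π / 2` is of order `(np)^{1-rε} / p`, which dominates
`k log 2 = (np)^ε log 2 / p` because `(r+1) ε < 1`.
-/

open Real Function Topology

section BlockIndependence

open ProbabilityTheory

variable {ι : Type*} [Fintype ι] {α : ι → Type*} [∀ i, MeasurableSpace (α i)]
  {μ : ∀ i, Measure (α i)} [∀ i, IsProbabilityMeasure (μ i)]

theorem measure_pi_inter_of_dependsOn_compl {S : Set ι} {E F : Set (∀ i, α i)}
    (hE : DependsOn (· ∈ E) S) (hF : DependsOn (· ∈ F) Sᶜ) :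
    Measure.pi μ (E ∩ F) = Measure.pi μ E * Measure.pi μ F := by
  classical
  let e := MeasurableEquiv.piEquivPiSubtypeProd α (· ∈ S)
  have he := measurePreserving_piEquivPiSubtypeProd μ (· ∈ S)
  let A := {x | ∃ ω ∈ E, (e ω).1 = x}
  let B := {y | ∃ ω ∈ F, (e ω).2 = y}
  have hEA : E = e ⁻¹' (A ×ˢ Set.univ) := by
    ext ω
    refine ⟨fun h => ⟨⟨ω, h, rfl⟩, trivial⟩, fun ⟨⟨ω', hω', h⟩, _⟩ => ?_⟩
    exact (hE fun i hi => congrFun h ⟨i, hi⟩).mp hω'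
  have hFB : F = e ⁻¹' (Set.univ ×ˢ B) := by
    ext ω
    refine ⟨fun h => ⟨trivial, ⟨ω, h, rfl⟩⟩, fun ⟨_, ⟨ω', hω', h⟩⟩ => ?_⟩
    exact (hF fun i hi => congrFun h ⟨i, hi⟩).mp hω'
  rw [hEA, hFB, ← Set.preimage_inter, Set.prod_inter_prod, Set.inter_univ, Set.univ_inter,
    he.measure_preimage_equiv, he.measure_preimage_equiv, he.measure_preimage_equiv,
    Measure.prod_prod, Measure.prod_prod, Measure.prod_prod]
  simp

theorem iIndepSet_pi_of_dependsOn {κ : Type*} {E : κ → Set (∀ i, α i)} {blk : κ → Set ι}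
    (hblk : Pairwise (Disjoint on blk)) (hE : ∀ j, DependsOn (· ∈ E j) (blk j))
    (hEm : ∀ j, MeasurableSet (E j)) : iIndepSet E (Measure.pi μ) := by
  classical
  rw [iIndepSet_iff_meas_biInter hEm]
  intro s
  induction s using Finset.induction_on with
  | empty => simp
  | insert a s ha ih =>
    rw [Finset.set_biInter_insert, Finset.prod_insert ha, ← ih]
    refine measure_pi_inter_of_dependsOn_compl (hE a) fun x y h => ?_
    simp only [Set.mem_iInter, eq_iff_iff]
    refine forall₂_congr fun j hj => iff_of_eq (hE j fun i hi => h i ?_)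
    exact Set.disjoint_right.1 (hblk fun h : a = j => ha (h ▸ hj)) hi

end BlockIndependence

open ProbabilityTheory in
theorem measureReal_card_le_le_of_iIndepSet {Ω ι : Type*} [MeasurableSpace Ω] [Fintype ι]
    {μ : Measure Ω} {A : ι → Set Ω} [∀ i, DecidablePred (· ∈ A i)] (hA : iIndepSet A μ)
    (hAm : ∀ i, MeasurableSet (A i)) {ρ : ℝ} (hρ : ∀ i, ρ ≤ μ.real (A i)) (k : ℝ) :
    μ.real {ω | (#{i | ω ∈ A i} : ℝ) ≤ k} ≤
      exp (k * log 2 - Fintype.card ι * ρ / 2) := by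
  have := hA.isProbabilityMeasure
  set X : ι → Ω → ℝ := fun i => (A i).indicator fun _ => 1
  have hX : iIndepFun X μ := hA.iIndepFun_indicator
  have hXm : ∀ i, Measurable (X i) := fun i => measurable_const.indicator (hAm i)
  have hcount : ∀ ω, (#{i | ω ∈ A i} : ℝ) = (∑ i, X i) ω := by
    intro ω
    simp [X, Finset.sum_apply, Set.indicator_apply, Finset.sum_boole]
  have hmgf : ∀ i, mgf (X i) μ (-log 2) ≤ exp (-(ρ / 2)) := by
    intro i
    have : ∀ ω, exp (-log 2 * X i ω) = 1 - (A i).indicator (fun _ => (2:ℝ)⁻¹) ω := by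
      intro ω
      by_cases h : ω ∈ A i <;> norm_num [X, h, exp_neg, exp_log]
    calc mgf (X i) μ (-log 2) = 1 - μ.real (A i) / 2 := by
          simp only [mgf, this]
          rw [integral_sub (integrable_const _) ((integrable_const _).indicator (hAm i)),
            integral_indicator_const _ (hAm i)]
          simp only [integral_const, probReal_univ, smul_eq_mul]
          ring
      _ ≤ 1 - ρ / 2 := by linarith [hρ i]
      _ ≤ exp (-(ρ / 2)) := by linarith [add_one_le_exp (-(ρ / 2))]
  have hlog : 0 ≤ log 2 := log_nonneg one_le_two
  have hint : Integrable (fun ω => exp (-log 2 * (∑ i, X i) ω)) μ := by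
    refine .of_bound (by fun_prop) 1 (ae_of_all _ fun ω => ?_)
    rw [norm_of_nonneg (exp_pos _).le, exp_le_one_iff, ← hcount]
    exact mul_nonpos_of_nonpos_of_nonneg (neg_nonpos.2 hlog) (Nat.cast_nonneg _)
  calc μ.real {ω | (#{i | ω ∈ A i} : ℝ) ≤ k} = μ.real {ω | (∑ i, X i) ω ≤ k} := by
        simp_rw [hcount]
    _ ≤ exp (log 2 * k) * mgf (∑ i, X i) μ (-log 2) := by
        simpa using measure_le_le_exp_mul_mgf (X := ∑ i, X i) k (neg_nonpos.2 hlog) hint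
    _ = exp (log 2 * k) * ∏ i, mgf (X i) μ (-log 2) := by
        rw [hX.mgf_sum hXm]
    _ ≤ exp (log 2 * k) * ∏ _i : ι, exp (-(ρ / 2)) := by
        gcongr with i
        · exact fun i _ => mgf_nonneg
        · exact hmgf i
    _ = exp (k * log 2 - Fintype.card ι * ρ / 2) := by
        rw [prod_const, ← exp_nat_mul, ← exp_add, card_univ]
        ring_nf

theorem binomTail_eq_sum_powerset (r : ℕ) {β : Type*} (B : Finset β) (q : ℝ) :
    binomTail r #B q = ∑ S ∈ B.powerset with r ≤ #S, q ^ #S * (1 - q) ^ (#B - #S) := by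
  rw [sum_filter,
    sum_powerset_apply_card (fun j => if r ≤ j then q ^ j * (1 - q) ^ (#B - j) else 0), binomTail]
  simp_rw [nsmul_eq_mul, mul_ite, mul_zero]
  rw [← sum_filter]
  refine sum_congr ?_ fun j _ => by ring
  ext j
  simp only [mem_Icc, mem_filter, mem_range]
  omega

theorem pow_div_factorial_mul_le_binomTail {r b : ℕ} {q : ℝ} (hq0 : 0 ≤ q) (hq1 : q ≤ 1)
    (hrb : 2 * r ≤ b) (hbq : b * q ≤ 1) :
    (b * q / 2) ^ r / r.factorial * (1 - b * q) ≤ binomTail r b q := by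
  have hchoose : ((b : ℝ) / 2) ^ r / r.factorial ≤ b.choose r := by
    refine le_trans ?_ (Nat.pow_le_choose r b)
    gcongr
    rw [Nat.cast_sub (by omega)]
    push_cast
    linarith [(show (2 * r : ℝ) ≤ b by exact_mod_cast hrb)]
  have hbernoulli : 1 - b * q ≤ (1 - q) ^ (b - r) := by
    refine le_trans ?_ (one_add_mul_le_pow (by linarith : (-2 : ℝ) ≤ -q) _)
    have : ((b - r : ℕ) : ℝ) ≤ b := by exact_mod_cast Nat.sub_le b r
    nlinarith
  calc (b * q / 2) ^ r / r.factorial * (1 - b * q)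
        = ((b : ℝ) / 2) ^ r / r.factorial * q ^ r * (1 - b * q) := by
        rw [mul_div_right_comm, mul_pow]
        ring
    _ ≤ b.choose r * q ^ r * (1 - q) ^ (b - r) := by gcongr
    _ ≤ binomTail r b q :=
        single_le_sum (f := fun j => (b.choose j : ℝ) * q ^ j * (1 - q) ^ (b - j))
          (fun j _ => by have := sub_nonneg.2 hq1; positivity) (mem_Icc.2 ⟨le_rfl, by omega⟩)

instance (n : ℕ) (q : ℝ) : IsProbabilityMeasure (gnp n q) := by
  unfold gnp; infer_instance

theorem bernoulliMeasure_real_singleton {q : ℝ} (h0 : 0 ≤ q) (h1 : q ≤ 1) (b : Bool) :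
    (bernoulliMeasure q).real {b} = if b then q else 1 - q := by
  rw [measureReal_def, bernoulliMeasure, PMF.toMeasure_apply_singleton _ _ (.of_discrete),
    PMF.bernoulli, PMF.ofFintype_apply, min_eq_left (Real.toNNReal_le_one.mpr h1)]
  cases b <;> simp [h0, h1]

theorem gnp_real_eval_eq {n : ℕ} {q : ℝ} (h0 : 0 ≤ q) (h1 : q ≤ 1) (e : Sym2 (Fin n))
    (b : Bool) : (gnp n q).real {ω | ω e = b} = if b then q else 1 - q := by
  rw [← bernoulliMeasure_real_singleton h0 h1, measureReal_def, measureReal_def, gnp,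
    ← (measurePreserving_eval (fun _ => bernoulliMeasure q) e).measure_preimage
      (MeasurableSet.of_discrete).nullMeasurableSet]
  rfl

section GnpNeighbours

open ProbabilityTheory

theorem gnp_real_filter_eq {n : ℕ} {q : ℝ} (h0 : 0 ≤ q) (h1 : q ≤ 1) (B S : Finset (Fin n))
    (hS : S ⊆ B) (v : Fin n) :
    (gnp n q).real {ω | {u ∈ B | ω s(u, v) = true} = S} = q ^ #S * (1 - q) ^ (#B - #S) := by
  let E : Fin n → Set (Sym2 (Fin n) → Bool) := fun u => {ω | ω s(u, v) = decide (u ∈ S)}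
  have hE : iIndepSet E (gnp n q) := by
    refine iIndepSet_pi_of_dependsOn (blk := fun u => {s(u, v)}) ?_ ?_ fun _ => .of_discrete
    · intro u u' huu'
      rw [onFun, Set.disjoint_singleton, Ne, Sym2.eq_iff]
      rintro (⟨h, -⟩ | ⟨h, h'⟩)
      exacts [huu' h, huu' (h.trans h')]
    · intro u ω ω' h
      simp [E, h s(u, v) rfl]
  have hset : {ω | {u ∈ B | ω s(u, v) = true} = S} = ⋂ u ∈ B, E u := by
    ext ω
    simp only [Set.mem_ofPred_eq, Set.mem_iInter, E, Finset.ext_iff, mem_filter]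
    refine forall_congr' fun u => ?_
    by_cases hu : u ∈ B
    · cases ω s(u, v) <;> simp [hu]
    · simpa [hu] using fun h => hu (hS h)
  rw [hset, measureReal_def, hE.meas_biInter, ENNReal.toReal_prod]
  simp_rw [← measureReal_def, E, gnp_real_eval_eq h0 h1, decide_eq_true_eq]
  rw [prod_ite, prod_const, prod_const, ← sdiff_eq_filter, card_sdiff_of_subset hS,
    filter_mem_eq_inter, inter_eq_right.2 hS]

theorem gnp_real_le_nbrCount_eq_binomTail {n : ℕ} {q : ℝ} (h0 : 0 ≤ q) (h1 : q ≤ 1)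
    (r : ℕ) {B : Finset (Fin n)} {v : Fin n} (hv : v ∉ B) :
    (gnp n q).real {ω | r ≤ nbrCount ω B v} = binomTail r #B q := by
  let N : (Sym2 (Fin n) → Bool) → Finset (Fin n) := fun ω => {u ∈ B | ω s(u, v) = true}
  have hN : {ω | r ≤ nbrCount ω B v} = N ⁻¹' ↑(B.powerset.filter (r ≤ #·)) := by
    ext ω
    simp only [Set.mem_ofPred_eq, Set.mem_preimage, coe_filter, mem_powerset, N, nbrCount]
    simp only [filter_subset, true_and]
    rw [filter_congr fun u hu => and_iff_right (ne_of_mem_of_not_mem hu hv)]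
  rw [hN, ← sum_measureReal_preimage_singleton (f := N) _ fun _ _ => .of_discrete,
    binomTail_eq_sum_powerset]
  refine sum_congr rfl fun S hS => gnp_real_filter_eq h0 h1 B S ?_ v
  exact mem_powerset.1 (mem_filter.1 hS).1

theorem iIndepSet_le_nbrCount {n : ℕ} (q : ℝ) (r : ℕ) (B U : Finset (Fin n))
    (hUB : Disjoint U B) : iIndepSet (fun v : U => {ω | r ≤ nbrCount ω B v}) (gnp n q) := by
  refine iIndepSet_pi_of_dependsOn (blk := fun v : U => (fun u => s(u, v)) '' B) ?_ ?_
    fun _ => .of_discrete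
  · rintro v w hvw
    refine Set.disjoint_left.2 ?_
    rintro _ ⟨u, hu, rfl⟩ ⟨u', hu', h⟩
    rcases Sym2.eq_iff.1 h with ⟨-, h⟩ | ⟨-, h⟩
    · exact hvw (Subtype.ext h.symm)
    · exact disjoint_left.1 hUB w.2 (h ▸ hu)
  · intro v ω ω' h
    simp only [Set.mem_ofPred_eq, nbrCount]
    rw [filter_congr fun u hu => by rw [h _ ⟨u, hu, rfl⟩]]

theorem one_sub_exp_le_gnp_real_le_card_nbrCount {n : ℕ} {q : ℝ} (h0 : 0 ≤ q) (h1 : q ≤ 1)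
    (r : ℕ) (B U : Finset (Fin n)) (hUB : Disjoint U B) (k : ℝ) :
    1 - exp (k * log 2 - #U * binomTail r #B q / 2) ≤
      (gnp n q).real {ω | k ≤ #{v ∈ U | r ≤ nbrCount ω B v}} := by
  have hlower := measureReal_card_le_le_of_iIndepSet (iIndepSet_le_nbrCount q r B U hUB)
    (fun _ => .of_discrete) (fun v : U => (gnp_real_le_nbrCount_eq_binomTail h0 h1 r
      (disjoint_left.1 hUB v.2)).ge) k
  have hcount (ω) :
      #{v : U | ω ∈ {ω | r ≤ nbrCount ω B v}} = #{v ∈ U | r ≤ nbrCount ω B v} :=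
    card_bij (fun v _ => v.1) (by simp) (by simp) (by aesop)
  simp only [hcount, Fintype.card_coe] at hlower
  calc 1 - exp (k * log 2 - #U * binomTail r #B q / 2)
      ≤ 1 - (gnp n q).real {ω | (#{v ∈ U | r ≤ nbrCount ω B v} : ℝ) ≤ k} := by linarith
    _ = (gnp n q).real {ω | (#{v ∈ U | r ≤ nbrCount ω B v} : ℝ) ≤ k}ᶜ :=
      (probReal_compl_eq_one_sub .of_discrete).symm
    _ ≤ (gnp n q).real {ω | k ≤ #{v ∈ U | r ≤ nbrCount ω B v}} :=
      measureReal_mono fun _ h => le_of_not_ge (Set.notMem_ofPred_iff.1 h)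

end GnpNeighbours

theorem ofReal_one_sub_exp_le_gnp_card_nbrCount {n r : ℕ} {q ε : ℝ} {B W : Finset (Fin n)}
    (hq0 : 0 < q) (hq1 : q < 1) (hε : 0 ≤ ε) (hx : 1 ≤ n * q)
    (hB : (#B : ℝ) = (n * q) ^ (-ε) * q⁻¹ / 4) (hrB : 2 * r ≤ #B)
    (hW : (#W : ℝ) ≤ n / 4)
    (hK : 16 * 8 ^ r * r.factorial * log 2 ≤ (n * q) ^ (1 - (r + 1) * ε)) :
    ENNReal.ofReal (1 - exp (-((n * q) ^ (1 - r * ε) / (16 * 8 ^ r * r.factorial * q)))) ≤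
      gnp n q
        {ω | (n * q) ^ ε * q⁻¹ ≤ #{v ∈ univ \ (B ∪ W) | r ≤ nbrCount ω B v}} := by
  set x : ℝ := n * q
  set β : ℝ := x ^ (-ε)
  set K : ℝ := 16 * 8 ^ r * r.factorial
  set U := univ \ (B ∪ W)
  have hx0 : 0 < x := by linarith
  have hK0 : 0 < K := by positivity
  have hβ0 : 0 < β := rpow_pos_of_pos hx0 _
  have hβ1 : β ≤ 1 := rpow_le_one_of_one_le_of_nonpos hx (neg_nonpos.2 hε)
  have hxε : x ^ ε = β⁻¹ := by simp only [β, rpow_neg hx0.le, inv_inv]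
  have hxβ (j : ℕ) : x ^ (1 - j * ε) = x * β ^ j := by
    rw [sub_eq_add_neg, rpow_add hx0, rpow_one, ← rpow_natCast, ← rpow_mul hx0.le]
    ring_nf
  have hbq : #B * q = β / 4 := by rw [hB]; field_simp
  have hU : n / 2 ≤ (#U : ℝ) := by
    have hBn : (#B : ℝ) ≤ n / 4 := by
      have : β ≤ n * q := by linarith
      nlinarith
    have hUcard : (#U : ℝ) = n - #(B ∪ W) := by
      rw [card_sdiff_of_subset (subset_univ _), card_univ, Fintype.card_fin,
        Nat.cast_sub (card_le_univ _ |>.trans_eq (Fintype.card_fin n))]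
    have : (#(B ∪ W) : ℝ) ≤ #B + #W := by exact_mod_cast card_union_le B W
    linarith
  have hπ : (β / 8) ^ r / r.factorial / 2 ≤ binomTail r #B q := by
    refine le_trans ?_ (pow_div_factorial_mul_le_binomTail hq0.le hq1.le hrB (by linarith))
    rw [hbq, show β / 4 / 2 = β / 8 by ring]
    have : 0 ≤ (β / 8) ^ r / r.factorial := by positivity
    nlinarith
  -- With `c = x β^r / (K q)`, the choice of `K` gives `k log 2 ≤ c ≤ #U π / 2 - c`.
  have hlog : β⁻¹ * q⁻¹ * log 2 ≤ x * β ^ r / (K * q) := by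
    have hxβ' := hxβ (r + 1)
    push_cast at hxβ'
    calc β⁻¹ * q⁻¹ * log 2 = K * log 2 / (K * β * q) := by field_simp
      _ ≤ x * β ^ (r + 1) / (K * β * q) := by rw [← hxβ']; gcongr
      _ = x * β ^ r / (K * q) := by field_simp; ring
  have hbinom : 2 * (x * β ^ r / (K * q)) ≤ #U * binomTail r #B q / 2 := by
    calc 2 * (x * β ^ r / (K * q)) = n / 2 * ((β / 8) ^ r / r.factorial / 2) / 2 := by
          simp only [x, K]; rw [div_pow]; field_simp; ring
      _ ≤ #U * binomTail r #B q / 2 := by gcongr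
  rw [← ofReal_measureReal]
  refine ENNReal.ofReal_le_ofReal ((sub_le_sub_left (exp_le_exp.2 ?_) 1).trans
    (one_sub_exp_le_gnp_real_le_card_nbrCount hq0.le hq1.le r B U
      (disjoint_sdiff_self_left.mono_right subset_union_left) _))
  rw [hxε, hxβ]
  linarith

theorem tendsto_rpow_neg_mul_inv_atTop {r : ℕ} {ε : ℝ} (hε : 0 < ε)
    (hrε : (r - 1) * ε ≤ 1) {p : ℕ → ℝ} (hp : ∀ n, p n ∈ Set.Ioo 0 1)
    (hnpr : Tendsto (fun n : ℕ => n * p n ^ r) atTop (𝓝 0)) :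
    Tendsto (fun n : ℕ => (n * p n) ^ (-ε) * (p n)⁻¹) atTop atTop := by
  -- `p (np)^ε = (n p^(1/ε + 1))^ε`, and `n p^(1/ε + 1) ≤ n p^r` as `r ≤ 1/ε + 1`.
  have hsmall : Tendsto (fun n : ℕ => ((n * p n ^ (ε⁻¹ + 1)) ^ ε)) atTop (𝓝 0) := by
    have hbase : Tendsto (fun n : ℕ => n * p n ^ (ε⁻¹ + 1)) atTop (𝓝 0) := by
      refine squeeze_zero (fun n => by have := (hp n).1; positivity) (fun n => ?_) hnpr
      rw [← rpow_natCast]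
      refine mul_le_mul_of_nonneg_left (rpow_le_rpow_of_exponent_ge (hp n).1 (hp n).2.le ?_)
        n.cast_nonneg
      have := (le_div_iff₀ hε).2 hrε
      rw [one_div] at this
      linarith
    simpa [zero_rpow hε.ne'] using hbase.rpow_const (Or.inr hε.le)
  have hpos : ∀ᶠ n : ℕ in atTop, 0 < (n * p n ^ (ε⁻¹ + 1)) ^ ε := by
    filter_upwards [eventually_gt_atTop 0] with n hn
    have := (hp n).1
    positivity
  refine (tendsto_inv_nhdsGT_zero.comp (tendsto_nhdsWithin_iff.2 ⟨hsmall, hpos⟩)).congr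
    fun n => ?_
  have h0 := (hp n).1
  rw [Function.comp_apply, rpow_add h0, rpow_one,
    show (n : ℝ) * (p n ^ ε⁻¹ * p n) = n * p n * p n ^ ε⁻¹ by ring,
    mul_rpow (by positivity) (by positivity), ← rpow_mul h0.le, inv_mul_cancel₀ hε.ne',
    rpow_one, mul_inv, rpow_neg (by positivity)]

/-- **First Chernoff boosting step.** Let `B, W ⊆ [n]` with
`|B| = (np)^{-1/(4(r-1))} p⁻¹ / 4` and `|W| = o(n)`. Then with probability
`1 - exp(-ω(p⁻¹))`, the number of vertices in `[n] ∖ (B ∪ W)` having at least `r`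
neighbours in `B` is at least `(np)^{1/(4(r-1))} p⁻¹`. -/
theorem first_chernoff_boost (r : ℕ) (hr : 2 ≤ r) (p : ℕ → ℝ)
    (hp : ∀ n, p n ∈ Set.Ioo (0 : ℝ) 1)
    (hnp : Tendsto (fun n : ℕ => (n : ℝ) * p n) atTop atTop)
    (hnpr : Tendsto (fun n : ℕ => (n : ℝ) * p n ^ r) atTop (nhds 0))
    (B W : ∀ n : ℕ, Finset (Fin n))
    (hB : ∀ n, ((B n).card : ℝ) =
      ((n : ℝ) * p n) ^ (-(1 : ℝ) / (4 * ((r : ℝ) - 1))) * (p n)⁻¹ / 4)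
    (hW : Tendsto (fun n : ℕ => ((W n).card : ℝ) / n) atTop (nhds 0)) :
    ∃ c : ℕ → ℝ, Tendsto (fun n => c n * p n) atTop atTop ∧
      ∀ᶠ n : ℕ in atTop,
        ENNReal.ofReal (1 - Real.exp (-(c n))) ≤
          gnp n (p n)
            {ω | ((n : ℝ) * p n) ^ ((1 : ℝ) / (4 * ((r : ℝ) - 1))) * (p n)⁻¹ ≤
              (((Finset.univ \ (B n ∪ W n)).filter
                fun v => r ≤ nbrCount ω (B n) v).card : ℝ)} := by
  set ε : ℝ := 1 / (4 * ((r : ℝ) - 1))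
  have hr2 : (2 : ℝ) ≤ r := by exact_mod_cast hr
  have hr1 : (0 : ℝ) < r - 1 := by linarith
  have hε : 0 < ε := by positivity
  have hεr (j : ℝ) (hj : j < 4 * (r - 1)) : 0 < 1 - j * ε := by
    rw [mul_one_div, sub_pos, div_lt_one (by positivity)]
    exact hj
  set K : ℝ := 16 * 8 ^ r * r.factorial
  refine ⟨fun n => (n * p n) ^ (1 - r * ε) / (K * p n), ?_, ?_⟩
  · refine (((tendsto_rpow_atTop (hεr r (by linarith))).comp hnp).atTop_div_const
      (show 0 < K by positivity)).congr fun n => ?_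
    rw [Function.comp_apply, div_mul_eq_mul_div, mul_div_mul_right _ _ (hp n).1.ne']
  · have hB' := tendsto_rpow_neg_mul_inv_atTop hε (by
      rw [mul_one_div, div_le_one (by positivity)]
      linarith) hp hnpr
    filter_upwards [hnp.eventually_ge_atTop 1,
      (hB'.atTop_div_const four_pos).eventually_ge_atTop (2 * r : ℝ),
      hW.eventually_lt_const (by norm_num : (0 : ℝ) < 1 / 4),
      ((tendsto_rpow_atTop (hεr (r + 1) (by linarith))).comp hnp).eventually_ge_atTop
        (K * Real.log 2)] with n hx hBn hWn hKn
    have hBε : ((B n).card : ℝ) = (n * p n) ^ (-ε) * (p n)⁻¹ / 4 := by rw [hB n, neg_div]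
    have hn : (0 : ℝ) < n := by nlinarith [(hp n).2]
    exact ofReal_one_sub_exp_le_gnp_card_nbrCount (hp n).1 (hp n).2 hε.le hx hBε
      (by exact_mod_cast hBε ▸ hBn) (by rw [div_lt_iff₀ hn] at hWn; linarith) hKn

end
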